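/- arXiv:2310.08894 — 2 statements merged into one kernel-verified Lean document; each statement's English description precedes it below -/
import Mathlib

section
/- Let C' be an F' × K array over {star, null}, and let C'_i (i ∈ [r-1]) be obtained from C' by cyclically shifting the columns of C' by i positions to the right. Suppose C' has stars only in columns that are multiples of r (columns r, 2r, ..., K where K = rK'), each such column having Z' stars. Then the vertical concatenation C = [C'; C'_1; ...; C'_{r-1}] is an rF' × K array in which each column contains exactly Z' stars, and any two columns at cyclic distance less than r have disjoint star supports; i.e., C is a (K, rF', Z', r) caching array. -/
/-- The representative of `a` mod `K` in `{1, ..., K}`. -/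
def cyc (K : ℕ) (a : ℤ) : ℤ := (a - 1) % (K : ℤ) + 1

/-- The star predicate of the vertical concatenation `C = [C'; C'_1; ...; C'_{r-1}]`,
where `C'_i` cyclically shifts the columns of `C'` by `i` positions to the right:
row `j ∈ [rF']` decomposes as `j = i·F' + j₀` with `i ∈ [0,r-1]`, `j₀ ∈ [1,F']`,
and the cell `(j,k)` is a star iff `C'[j₀][⟨k-i⟩_K]` is. -/
def starC (K F' r : ℕ) (star' : ℤ → ℤ → Prop) (j k : ℤ) : Prop :=
  ∃ i : ℕ, i < r ∧ ∃ j₀ : ℤ, 1 ≤ j₀ ∧ j₀ ≤ F' ∧ j = (i : ℤ) * F' + j₀ ∧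
    star' j₀ (cyc K (k - i))

/-!
Since the stars of `C'` lie in columns divisible by `r` and `r ∣ K`, a star of the shifted
block `C'_i` in column `k` forces `k ≡ i [ZMOD r]`. Hence column `k` of `C` meets only the block
`i = k % r`, where it is a translated copy of a column of `C'` divisible by `r` (so has `Z'` stars),
and a row of `C` lies in a single block, so all its stars are in columns of one residue class
mod `r`; two such columns have cyclic distance a positive multiple of `r`.
-/

theorem cyc_modEq (K : ℕ) (a : ℤ) : cyc K a ≡ a [ZMOD K] := by
  simpa [cyc] using (Int.mod_modEq (a - 1) K).add_right 1

theorem cyc_mem_Icc {K : ℕ} (hK : 0 < K) (a : ℤ) : cyc K a ∈ Set.Icc 1 (K : ℤ) := by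
  have h₀ := Int.emod_nonneg (a - 1) (by omega : (K : ℤ) ≠ 0)
  have h₁ := Int.emod_lt_of_pos (a - 1) (by omega : (0 : ℤ) < K)
  constructor <;> unfold cyc <;> omega

theorem dvd_cyc_iff {n : ℤ} {K : ℕ} (h : n ∣ K) (a : ℤ) : n ∣ cyc K a ↔ n ∣ a :=
  ((cyc_modEq K a).of_dvd h).dvd_iff

theorem le_cyc_of_dvd {K r : ℕ} (hK : 0 < K) (hrK : r ∣ K) {a : ℤ} (ha : (r : ℤ) ∣ a) :
    (r : ℤ) ≤ cyc K a :=
  Int.le_of_dvd (cyc_mem_Icc hK a).1 ((dvd_cyc_iff (Int.natCast_dvd_natCast.2 hrK) a).2 ha)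

theorem eq_of_mul_add_eq_mul_add {F i₁ i₂ j₁ j₂ : ℤ} (hj₁ : j₁ ∈ Set.Icc 1 F)
    (hj₂ : j₂ ∈ Set.Icc 1 F) (h : i₁ * F + j₁ = i₂ * F + j₂) : i₁ = i₂ := by
  obtain ⟨h₁, h₁'⟩ := hj₁
  obtain ⟨h₂, h₂'⟩ := hj₂
  rcases lt_trichotomy i₁ i₂ with hlt | heq | hgt
  · nlinarith
  · exact heq
  · nlinarith

section ShiftedConcatenation

variable {K F r : ℕ} {star : ℤ → ℤ → Prop}

theorem mem_Icc_of_starC {j k : ℤ} (h : starC K F r star j k) :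
    j ∈ Set.Icc 1 ((r * F : ℕ) : ℤ) := by
  obtain ⟨i, hi, j₀, h₁, h₂, rfl, -⟩ := h
  have : (i : ℤ) + 1 ≤ r := by exact_mod_cast hi
  push_cast
  constructor <;> nlinarith

theorem shift_eq_emod_of_star (hmult : ∀ j k, star j k → (r : ℤ) ∣ k) (hrK : r ∣ K) {i : ℕ}
    (hi : i < r) {j₀ k : ℤ} (h : star j₀ (cyc K (k - i))) : (i : ℤ) = k % r := by
  have hdvd : (r : ℤ) ∣ k - i :=
    (dvd_cyc_iff (Int.natCast_dvd_natCast.2 hrK) _).1 (hmult _ _ h)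
  rw [← Int.emod_eq_of_lt (Int.natCast_nonneg i) (by exact_mod_cast hi : (i : ℤ) < r)]
  exact Int.modEq_iff_dvd.2 hdvd

theorem starC_iff_mem_image (hmult : ∀ j k, star j k → (r : ℤ) ∣ k) (hrK : r ∣ K) {i : ℕ}
    (hi : i < r) {k : ℤ} (hik : k % r = i) (j : ℤ) :
    starC K F r star j k ↔
      j ∈ (fun j₀ => (i : ℤ) * F + j₀) '' {j₀ ∈ Set.Icc 1 (F : ℤ) | star j₀ (cyc K (k - i))} := by
  constructor
  · rintro ⟨i', hi', j₀, h₁, h₂, rfl, hs⟩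
    obtain rfl : i' = i := by have := shift_eq_emod_of_star hmult hrK hi' hs; omega
    exact ⟨j₀, ⟨⟨h₁, h₂⟩, hs⟩, rfl⟩
  · rintro ⟨j₀, ⟨⟨h₁, h₂⟩, hs⟩, rfl⟩
    exact ⟨i, hi, j₀, h₁, h₂, rfl, hs⟩

theorem exists_ncard_column_starC_eq (hmult : ∀ j k, star j k → (r : ℤ) ∣ k) (hrK : r ∣ K)
    {k : ℤ} (hk : k ∈ Set.Icc 1 (K : ℤ)) :
    ∃ c ∈ Set.Icc 1 (K : ℤ), (r : ℤ) ∣ c ∧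
      {j ∈ Set.Icc 1 ((r * F : ℕ) : ℤ) | starC K F r star j k}.ncard =
        {j₀ ∈ Set.Icc 1 (F : ℤ) | star j₀ c}.ncard := by
  have hK : 0 < K := by have := hk.1; have := hk.2; omega
  have hr : (0 : ℤ) < r := by exact_mod_cast Nat.pos_of_dvd_of_pos hrK hK
  obtain ⟨i, hik⟩ := Int.eq_ofNat_of_zero_le (Int.emod_nonneg k hr.ne')
  have hi : i < r := by have := Int.emod_lt_of_pos k hr; omega
  have hcolumn : {j ∈ Set.Icc 1 ((r * F : ℕ) : ℤ) | starC K F r star j k} =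
      (fun j₀ => (i : ℤ) * F + j₀) '' {j₀ ∈ Set.Icc 1 (F : ℤ) | star j₀ (cyc K (k - i))} := by
    ext j
    rw [← starC_iff_mem_image hmult hrK hi hik]
    exact ⟨And.right, fun h => ⟨mem_Icc_of_starC h, h⟩⟩
  refine ⟨cyc K (k - i), cyc_mem_Icc hK _, ?_, ?_⟩
  · exact (dvd_cyc_iff (Int.natCast_dvd_natCast.2 hrK) _).2 (Int.dvd_self_sub_of_emod_eq hik)
  · rw [hcolumn, Set.ncard_image_of_injective _ (add_right_injective _)]

theorem emod_eq_of_starC_of_starC (hmult : ∀ j k, star j k → (r : ℤ) ∣ k) (hrK : r ∣ K)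
    {j k₁ k₂ : ℤ} (h₁ : starC K F r star j k₁) (h₂ : starC K F r star j k₂) :
    k₁ % r = k₂ % r := by
  obtain ⟨i₁, hi₁, j₁, ha, ha', rfl, hs₁⟩ := h₁
  obtain ⟨i₂, hi₂, j₂, hb, hb', he, hs₂⟩ := h₂
  rw [← shift_eq_emod_of_star hmult hrK hi₁ hs₁, ← shift_eq_emod_of_star hmult hrK hi₂ hs₂]
  exact eq_of_mul_add_eq_mul_add ⟨ha, ha'⟩ ⟨hb, hb'⟩ he

theorem not_starC_and_starC_of_cyc_lt (hmult : ∀ j k, star j k → (r : ℤ) ∣ k) (hrK : r ∣ K)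
    (hK : 0 < K) {k₁ k₂ : ℤ} (hd : cyc K (k₁ - k₂) < r) (j : ℤ) :
    ¬(starC K F r star j k₁ ∧ starC K F r star j k₂) := by
  rintro ⟨h₁, h₂⟩
  have hdvd : (r : ℤ) ∣ k₁ - k₂ := Int.ModEq.dvd (emod_eq_of_starC_of_starC hmult hrK h₂ h₁)
  exact (le_cyc_of_dvd hK hrK hdvd).not_gt hd

end ShiftedConcatenation

theorem stmt15_general (K' F' Z' r : ℕ)
    (star' : ℤ → ℤ → Prop)
    -- stars only in columns that are multiples of r
    (hmult : ∀ j k, star' j k → (r : ℤ) ∣ k)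
    -- each such column has exactly Z' stars
    (hcol : ∀ k ∈ Set.Icc (1 : ℤ) ((r * K' : ℕ) : ℤ), (r : ℤ) ∣ k →
      {j ∈ Set.Icc (1 : ℤ) F' | star' j k}.ncard = Z') :
    -- each column of C contains exactly Z' stars
    (∀ k ∈ Set.Icc (1 : ℤ) ((r * K' : ℕ) : ℤ),
      {j ∈ Set.Icc (1 : ℤ) ((r * F' : ℕ) : ℤ) |
        starC (r * K') F' r star' j k}.ncard = Z') ∧
    -- columns at cyclic distance less than r have disjoint star supports
    (∀ k₁ ∈ Set.Icc (1 : ℤ) ((r * K' : ℕ) : ℤ),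
      ∀ k₂ ∈ Set.Icc (1 : ℤ) ((r * K' : ℕ) : ℤ), k₁ ≠ k₂ →
      (cyc (r * K') (k₁ - k₂) < r ∨ cyc (r * K') (k₂ - k₁) < r) →
      ∀ j, ¬(starC (r * K') F' r star' j k₁ ∧ starC (r * K') F' r star' j k₂)) := by
  have hrK : r ∣ r * K' := dvd_mul_right r K'
  refine ⟨fun k hk => ?_, fun k₁ hk₁ k₂ _ _ hd j => ?_⟩
  · obtain ⟨c, hc, hrc, hcard⟩ := exists_ncard_column_starC_eq hmult hrK hk
    rw [hcard, hcol c hc hrc]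
  · have hK : 0 < r * K' := by have := hk₁.1; have := hk₁.2; omega
    rcases hd with hd | hd
    · exact not_starC_and_starC_of_cyc_lt hmult hrK hK hd j
    · exact fun h => not_starC_and_starC_of_cyc_lt hmult hrK hK hd j h.symm

theorem stmt15 (K' F' Z' r : ℕ) (hr : 0 < r) (hK' : 0 < K') (hF' : 0 < F')
    (star' : ℤ → ℤ → Prop)
    -- C' is an F' × K array, K = rK'
    (hin : ∀ j k, star' j k →
      j ∈ Set.Icc (1 : ℤ) F' ∧ k ∈ Set.Icc (1 : ℤ) ((r * K' : ℕ) : ℤ))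
    -- stars only in columns that are multiples of r
    (hmult : ∀ j k, star' j k → (r : ℤ) ∣ k)
    -- each such column has exactly Z' stars
    (hcol : ∀ k ∈ Set.Icc (1 : ℤ) ((r * K' : ℕ) : ℤ), (r : ℤ) ∣ k →
      {j ∈ Set.Icc (1 : ℤ) F' | star' j k}.ncard = Z') :
    -- each column of C contains exactly Z' stars
    (∀ k ∈ Set.Icc (1 : ℤ) ((r * K' : ℕ) : ℤ),
      {j ∈ Set.Icc (1 : ℤ) ((r * F' : ℕ) : ℤ) |
        starC (r * K') F' r star' j k}.ncard = Z') ∧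
    -- columns at cyclic distance less than r have disjoint star supports
    (∀ k₁ ∈ Set.Icc (1 : ℤ) ((r * K' : ℕ) : ℤ),
      ∀ k₂ ∈ Set.Icc (1 : ℤ) ((r * K' : ℕ) : ℤ), k₁ ≠ k₂ →
      (cyc (r * K') (k₁ - k₂) < r ∨ cyc (r * K') (k₂ - k₁) < r) →
      ∀ j, ¬(starC (r * K') F' r star' j k₁ ∧ starC (r * K') F' r star' j k₂)) :=
  stmt15_general K' F' Z' r star' hmult hcol
end

section
/- For positive integers K, r, t, L with K ≥ r(t+L), the total number of pairs (J, w_J), where J ⊆ [K] is an r-spread cyclic subset of size t+L and w_J consists of t cyclically consecutive elements of J, equals K · C(K - (r-1)(t+L) - 1, t+L - 1). -/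
/-- `J ⊆ [K]` is `r`-spread (cyclically): all pairs of distinct elements have
both cyclic distances at least `r`. -/
def rSpread (K r : ℕ) (J : Finset ℕ) : Prop :=
  J ⊆ Finset.Icc 1 K ∧ ∀ j ∈ J, ∀ j' ∈ J, j ≠ j' →
    (r : ℤ) ≤ cyc K ((j : ℤ) - (j' : ℤ)) ∧ (r : ℤ) ≤ cyc K ((j' : ℤ) - (j : ℤ))

/-!
Distinct start indices give distinct windows (this uses `0 < t < t + L`), so the count is `t + L`
times the number of `r`-spread `(t + L)`-sets. Rotations of `[K]` preserve `r`-spreadness, so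
every point of `[K]` lies in equally many such sets, and double counting the incidences gives
`(t + L) · #spread sets = K · #{spread sets containing K}`. The spread sets containing `K` are
exactly the sets of partial sums of compositions of `K` into `t + L` parts, each at least `r`;
subtracting `r` from every part and applying stars and bars counts these.
-/
open Finset

section Cyc

variable {K : ℕ}

lemma cyc_emod (a : ℤ) : cyc K a % K = a % K := by
  unfold cyc
  rw [Int.add_emod, Int.emod_emod, ← Int.add_emod, sub_add_cancel]

lemma cyc_congr {a b : ℤ} (h : a % K = b % K) : cyc K a = cyc K b := by
  unfold cyc; rw [Int.sub_emod, h, ← Int.sub_emod]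

lemma one_le_cyc (hK : 0 < K) (a : ℤ) : 1 ≤ cyc K a := by
  have := Int.emod_nonneg (a - 1) (by omega : (K : ℤ) ≠ 0)
  unfold cyc; omega

lemma cyc_le (hK : 0 < K) (a : ℤ) : cyc K a ≤ K := by
  have := Int.emod_lt_of_pos (a - 1) (by omega : (0 : ℤ) < K)
  unfold cyc; omega

lemma cyc_eq_self {a : ℤ} (h1 : 1 ≤ a) (h2 : a ≤ K) : cyc K a = a := by
  unfold cyc; rw [Int.emod_eq_of_lt (by omega) (by omega)]; ring

lemma cyc_sub_of_lt {x y : ℕ} (hx : 1 ≤ x) (hxy : x < y) (hy : y ≤ K) :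
    cyc K ((y : ℤ) - x) = y - x ∧ cyc K ((x : ℤ) - y) = K - (y - x) := by
  refine ⟨cyc_eq_self (by omega) (by omega), ?_⟩
  rw [cyc_congr (b := (x : ℤ) - y + K) (by simp), cyc_eq_self (by omega) (by omega)]
  ring

end Cyc

lemma rSpread_iff {K r : ℕ} {J : Finset ℕ} :
    rSpread K r J ↔
      J ⊆ Icc 1 K ∧ ∀ x ∈ J, ∀ y ∈ J, x < y → x + r ≤ y ∧ y + r ≤ x + K := by
  refine and_congr_right fun hJ => ⟨fun h x hx y hy hxy => ?_, fun h x hx y hy hne => ?_⟩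
  · have hx' := mem_Icc.1 (hJ hx)
    have hy' := mem_Icc.1 (hJ hy)
    have := h y hy x hx hxy.ne'
    rw [(cyc_sub_of_lt hx'.1 hxy hy'.2).1, (cyc_sub_of_lt hx'.1 hxy hy'.2).2] at this
    omega
  · have hx' := mem_Icc.1 (hJ hx)
    have hy' := mem_Icc.1 (hJ hy)
    rcases lt_or_gt_of_ne hne with hxy | hyx
    · have := h x hx y hy hxy
      rw [(cyc_sub_of_lt hx'.1 hxy hy'.2).1, (cyc_sub_of_lt hx'.1 hxy hy'.2).2]
      omega
    · have := h y hy x hx hyx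
      rw [(cyc_sub_of_lt hy'.1 hyx hx'.2).1, (cyc_sub_of_lt hy'.1 hyx hx'.2).2]
      omega

section Rotate

variable {K : ℕ}

def rotate (K : ℕ) (c : ℤ) (x : ℕ) : ℕ := (cyc K (x + c)).toNat

lemma coe_rotate (hK : 0 < K) (c : ℤ) (x : ℕ) : (rotate K c x : ℤ) = cyc K (x + c) :=
  Int.toNat_of_nonneg (by linarith [one_le_cyc hK (x + c)])

lemma rotate_mem_Icc (hK : 0 < K) (c : ℤ) (x : ℕ) : rotate K c x ∈ Icc 1 K := by
  have h1 := one_le_cyc hK (x + c)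
  have h2 := cyc_le hK (x + c)
  rw [mem_Icc, ← Nat.cast_le (α := ℤ), ← Nat.cast_le (α := ℤ), coe_rotate hK]
  exact ⟨h1, h2⟩

lemma rotate_sub_apply (hK : 0 < K) {x y : ℕ} (hy : y ∈ Icc 1 K) :
    rotate K ((y : ℤ) - x) x = y := by
  have hy' := mem_Icc.1 hy
  rw [← Nat.cast_inj (R := ℤ), coe_rotate hK, add_sub_cancel, cyc_eq_self (by omega) (by omega)]

lemma cyc_rotate_sub_rotate (hK : 0 < K) (c : ℤ) (x y : ℕ) :
    cyc K ((rotate K c x : ℤ) - rotate K c y) = cyc K ((x : ℤ) - y) := by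
  refine cyc_congr ?_
  rw [coe_rotate hK, coe_rotate hK, Int.sub_emod, cyc_emod, cyc_emod, ← Int.sub_emod]
  ring_nf

lemma rotate_neg_rotate (hK : 0 < K) (c : ℤ) {x : ℕ} (hx : x ∈ Icc 1 K) :
    rotate K (-c) (rotate K c x) = x := by
  have hx' := mem_Icc.1 hx
  rw [← Nat.cast_inj (R := ℤ), coe_rotate hK, coe_rotate hK,
    cyc_congr (b := x) (by rw [Int.add_emod, cyc_emod, ← Int.add_emod]; ring_nf),
    cyc_eq_self (by omega) (by omega)]

lemma image_rotate_neg_image_rotate (hK : 0 < K) (c : ℤ) {J : Finset ℕ} (hJ : J ⊆ Icc 1 K) :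
    (J.image (rotate K c)).image (rotate K (-c)) = J := by
  rw [image_image]
  conv_rhs => rw [← image_id (s := J)]
  exact image_congr fun x hx => rotate_neg_rotate hK c (hJ hx)

lemma card_image_rotate (hK : 0 < K) (c : ℤ) {J : Finset ℕ} (hJ : J ⊆ Icc 1 K) :
    #(J.image (rotate K c)) = #J :=
  le_antisymm card_image_le <| by
    conv_lhs => rw [← image_rotate_neg_image_rotate hK c hJ]
    exact card_image_le

lemma rSpread_image_rotate (hK : 0 < K) (c : ℤ) {r : ℕ} {J : Finset ℕ} (hJ : rSpread K r J) :
    rSpread K r (J.image (rotate K c)) := by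
  refine ⟨fun y hy => ?_, ?_⟩
  · obtain ⟨x, -, rfl⟩ := mem_image.1 hy
    exact rotate_mem_Icc hK c x
  · simp only [mem_image, forall_exists_index, and_imp]
    rintro _ x hx rfl _ y hy rfl hne
    rw [cyc_rotate_sub_rotate hK, cyc_rotate_sub_rotate hK]
    exact hJ.2 x hx y hy fun h => hne (h ▸ rfl)

end Rotate

instance (K r : ℕ) : DecidablePred (rSpread K r) := fun _ => by unfold rSpread; infer_instance

def spreadSets (K r n : ℕ) : Finset (Finset ℕ) :=
  {J ∈ (Icc 1 K).powersetCard n | rSpread K r J}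

section SpreadSets

variable {K r n : ℕ}

lemma mem_spreadSets {J : Finset ℕ} : J ∈ spreadSets K r n ↔ rSpread K r J ∧ #J = n := by
  rw [spreadSets, mem_filter, mem_powersetCard]
  exact ⟨fun h => ⟨h.2, h.1.2⟩, fun h => ⟨⟨h.1.1, h.2⟩, h.1⟩⟩

lemma card_filter_mem_spreadSets_le (hK : 0 < K) {j j' : ℕ} (hj' : j' ∈ Icc 1 K) :
    #{J ∈ spreadSets K r n | j ∈ J} ≤ #{J ∈ spreadSets K r n | j' ∈ J} := by
  set c : ℤ := (j' : ℤ) - j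
  refine card_le_card_of_injOn (fun J => J.image (rotate K c)) (fun J hJ => ?_) ?_
  · simp only [mem_coe, mem_filter, mem_spreadSets] at hJ ⊢
    obtain ⟨⟨hsp, hcard⟩, hj⟩ := hJ
    exact ⟨⟨rSpread_image_rotate hK c hsp, by rw [card_image_rotate hK c hsp.1, hcard]⟩,
      mem_image.2 ⟨j, hj, rotate_sub_apply hK hj'⟩⟩
  · intro J hJ J' hJ' h
    simp only [mem_coe, mem_filter, mem_spreadSets] at hJ hJ'
    rw [← image_rotate_neg_image_rotate hK c hJ.1.1.1,
      ← image_rotate_neg_image_rotate hK c hJ'.1.1.1]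
    exact congrArg (image (rotate K (-c))) h

lemma mul_card_spreadSets (hK : 0 < K) :
    n * #(spreadSets K r n) = K * #{J ∈ spreadSets K r n | K ∈ J} := by
  have hKK : K ∈ Icc 1 K := mem_Icc.2 ⟨hK, le_rfl⟩
  calc n * #(spreadSets K r n)
      = ∑ J ∈ spreadSets K r n, #(Icc 1 K ∩ J) := by
        rw [mul_comm, sum_const_nat fun J hJ => ?_]
        rw [inter_eq_right.2 (mem_spreadSets.1 hJ).1.1, (mem_spreadSets.1 hJ).2]
    _ = #(Icc 1 K) * #{J ∈ spreadSets K r n | K ∈ J} :=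
        sum_card_inter fun j hj => le_antisymm (card_filter_mem_spreadSets_le hK hKK)
          (card_filter_mem_spreadSets_le hK hj)
    _ = K * #{J ∈ spreadSets K r n | K ∈ J} := by rw [Nat.card_Icc, Nat.add_sub_cancel]

end SpreadSets

section PrefixSum

variable {n : ℕ}

def prefixSum (g : Fin n → ℕ) (m : Fin n) : ℕ := ∑ i ∈ Iic m, g i

lemma le_prefixSum (g : Fin n → ℕ) (m : Fin n) : g m ≤ prefixSum g m :=
  single_le_sum (fun _ _ => Nat.zero_le _) (mem_Iic.2 le_rfl)

lemma prefixSum_le_sum (g : Fin n → ℕ) (m : Fin n) : prefixSum g m ≤ ∑ i, g i :=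
  sum_le_sum_of_subset (subset_univ _)

lemma prefixSum_eq_sum {g : Fin n → ℕ} {m : Fin n} (hm : (m : ℕ) + 1 = n) :
    prefixSum g m = ∑ i, g i := by
  rw [prefixSum, eq_univ_of_forall fun i => mem_Iic.2 (Fin.le_def.2 (by have := i.2; omega))]

lemma prefixSum_add_le_of_lt (g : Fin n → ℕ) {m m' : Fin n} (h : m < m') :
    prefixSum g m + g m' ≤ prefixSum g m' := by
  have hm' : m' ∉ Iic m := fun hm' => h.not_ge (mem_Iic.1 hm')
  rw [prefixSum, add_comm, ← sum_insert hm']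
  exact sum_le_sum_of_subset fun i hi => by
    rcases mem_insert.1 hi with rfl | hi
    exacts [mem_Iic.2 le_rfl, mem_Iic.2 ((mem_Iic.1 hi).trans h.le)]

lemma prefixSum_zero (g : Fin n → ℕ) (h : 0 < n) : prefixSum g ⟨0, h⟩ = g ⟨0, h⟩ := by
  have : Iic (⟨0, h⟩ : Fin n) = {⟨0, h⟩} := by ext i; simp [Fin.le_def, Fin.ext_iff]
  rw [prefixSum, this, sum_singleton]

lemma prefixSum_succ (g : Fin n → ℕ) {m : ℕ} (h : m + 1 < n) :
    prefixSum g ⟨m + 1, h⟩ = prefixSum g ⟨m, by omega⟩ + g ⟨m + 1, h⟩ := by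
  have : Iic (⟨m + 1, h⟩ : Fin n) = insert ⟨m + 1, h⟩ (Iic ⟨m, by omega⟩) := by
    ext i; simp only [mem_Iic, Fin.le_def, mem_insert, Fin.ext_iff]; omega
  rw [prefixSum, this, sum_insert (by simp [Fin.le_def]), add_comm]
  rfl

lemma strictMono_prefixSum {g : Fin n → ℕ} (hg : ∀ i, 0 < g i) : StrictMono (prefixSum g) :=
  fun _ _ h => (Nat.lt_add_of_pos_right (hg _)).trans_le (prefixSum_add_le_of_lt g h)

lemma prefixSum_injective : Function.Injective (prefixSum (n := n)) := by
  intro g g' h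
  funext ⟨m, hm⟩
  cases m with
  | zero => simpa only [prefixSum_zero] using congrFun h ⟨0, hm⟩
  | succ m =>
    have := congrFun h ⟨m + 1, hm⟩
    rw [prefixSum_succ, prefixSum_succ, congrFun h] at this
    omega

lemma exists_prefixSum_eq {σ : Fin n → ℕ} (hσ : Monotone σ) : ∃ g, prefixSum g = σ := by
  refine ⟨fun m => σ m - if h : (m : ℕ) = 0 then 0 else σ ⟨m - 1, by omega⟩, ?_⟩
  funext ⟨m, hm⟩
  induction m with
  | zero => simp [prefixSum_zero]
  | succ m ih =>
    have := hσ (Fin.mk_le_mk.2 (Nat.le_succ m) : (⟨m, by omega⟩ : Fin n) ≤ ⟨m + 1, hm⟩)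
    rw [prefixSum_succ, ih]
    simp only [Nat.add_one_ne_zero, dite_false, Nat.add_sub_cancel]
    omega

end PrefixSum

lemma card_antidiagonalTuple (n m : ℕ) :
    #(Nat.antidiagonalTuple n m) = (n + m - 1).choose m := by
  have := Sym.card_sym_eq_choose (α := Fin n) m
  rw [Fintype.card_fin] at this
  rw [← this, ← Fintype.card_coe,
    Fintype.card_congr ((Equiv.subtypeEquivRight fun _ => Nat.mem_antidiagonalTuple).trans
      (Sym.equivNatSumOfFintype (Fin n) m).symm)]

lemma card_antidiagonalTuple_filter_le {n r K : ℕ} (h : r * n ≤ K) :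
    #{g ∈ Nat.antidiagonalTuple n K | ∀ i, r ≤ g i} =
      #(Nat.antidiagonalTuple n (K - r * n)) := by
  symm
  refine card_nbij' (fun g i => g i + r) (fun g i => g i - r) (fun g hg => ?_) (fun g hg => ?_)
    (fun g _ => by funext i; simp) (fun g hg => ?_)
  · simp only [mem_coe, mem_filter, Nat.mem_antidiagonalTuple] at hg ⊢
    refine ⟨?_, fun i => Nat.le_add_left r (g i)⟩
    rw [sum_add_distrib, hg, sum_const, card_univ, Fintype.card_fin, smul_eq_mul, mul_comm n r]
    omega
  · simp only [mem_coe, mem_filter, Nat.mem_antidiagonalTuple] at hg ⊢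
    have : ∑ i, (g i - r) + ∑ _i : Fin n, r = K := by
      rw [← sum_add_distrib, ← hg.1]
      exact sum_congr rfl fun i _ => Nat.sub_add_cancel (hg.2 i)
    rw [sum_const, card_univ, Fintype.card_fin, smul_eq_mul, mul_comm] at this
    omega
  · simp only [mem_coe, mem_filter] at hg
    funext i; exact Nat.sub_add_cancel (hg.2 i)

section Compositions

variable {K r n : ℕ}

lemma image_prefixSum_mem_spreadSets (hr : 0 < r) {g : Fin n → ℕ} (hg : ∀ i, r ≤ g i)
    (hsum : ∑ i, g i = K) : univ.image (prefixSum g) ∈ spreadSets K r n := by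
  have hmono := strictMono_prefixSum fun i => hr.trans_le (hg i)
  rw [mem_spreadSets, rSpread_iff, card_image_of_injective _ hmono.injective, card_univ,
    Fintype.card_fin]
  simp only [subset_iff, mem_image, mem_univ, true_and, forall_exists_index,
    forall_apply_eq_imp_iff, mem_Icc]
  refine ⟨⟨fun m => ⟨?_, hsum ▸ prefixSum_le_sum g m⟩, fun m m' hlt => ?_⟩, trivial⟩
  · exact hr.trans_le ((hg m).trans (le_prefixSum g m))
  · have := prefixSum_add_le_of_lt g (hmono.lt_iff_lt.1 hlt)
    have := hg m'
    have := (hg m).trans (le_prefixSum g m)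
    have := hsum ▸ prefixSum_le_sum g m'
    omega

lemma top_mem_image_prefixSum (hn : 0 < n) {g : Fin n → ℕ} (hsum : ∑ i, g i = K) :
    K ∈ univ.image (prefixSum g) :=
  mem_image.2
    ⟨⟨n - 1, by omega⟩, mem_univ _, (prefixSum_eq_sum (Nat.sub_add_cancel hn)).trans hsum⟩

lemma exists_prefixSum_of_mem_spreadSets (hrK : r ≤ K) {J : Finset ℕ}
    (hJ : J ∈ spreadSets K r n) (hKJ : K ∈ J) :
    ∃ g ∈ {g ∈ Nat.antidiagonalTuple n K | ∀ i, r ≤ g i},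
      univ.image (prefixSum g) = J := by
  obtain ⟨hsp, hc⟩ := mem_spreadSets.1 hJ
  obtain ⟨hsub, hgap⟩ := rSpread_iff.1 hsp
  have hn : 0 < n := hc ▸ card_pos.2 ⟨K, hKJ⟩
  set σ := J.orderEmbOfFin hc
  have hσJ (m : Fin n) : σ m ∈ J := orderEmbOfFin_mem J hc m
  obtain ⟨g, hg⟩ := exists_prefixSum_eq σ.monotone
  refine ⟨g, mem_filter.2 ⟨Nat.mem_antidiagonalTuple.2 ?_, fun ⟨m, hm⟩ => ?_⟩, ?_⟩
  · rw [← prefixSum_eq_sum (m := ⟨n - 1, by omega⟩) (Nat.sub_add_cancel hn), hg,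
      orderEmbOfFin_last hc hn]
    exact le_antisymm (max'_le _ _ _ fun y hy => (mem_Icc.1 (hsub hy)).2) (le_max' _ _ hKJ)
  · cases m with
    | zero =>
      rw [← prefixSum_zero g hm, hg]
      rcases (mem_Icc.1 (hsub (hσJ ⟨0, hm⟩))).2.eq_or_lt with h | h
      · exact h ▸ hrK
      · have := (hgap _ (hσJ ⟨0, hm⟩) K hKJ h).2
        omega
    | succ m =>
      have hsucc := prefixSum_succ g hm
      rw [hg] at hsucc
      have := (hgap _ (hσJ ⟨m, by omega⟩) _ (hσJ ⟨m + 1, hm⟩)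
        (σ.strictMono (Fin.mk_lt_mk.2 (Nat.lt_succ_self m)))).1
      omega
  · rw [hg, image_orderEmbOfFin_univ]

lemma card_filter_top_mem_spreadSets (hr : 0 < r) (hn : 0 < n) (h : r * n ≤ K) :
    #{J ∈ spreadSets K r n | K ∈ J} = (K - (r - 1) * n - 1).choose (n - 1) := by
  have hrK : r ≤ K := (Nat.le_mul_of_pos_right r hn).trans h
  set C : Finset (Fin n → ℕ) := {g ∈ Nat.antidiagonalTuple n K | ∀ i, r ≤ g i}
  have hmono {g : Fin n → ℕ} (hg : g ∈ C) : StrictMono (prefixSum g) :=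
    strictMono_prefixSum fun i => hr.trans_le ((mem_filter.1 hg).2 i)
  have himage : {J ∈ spreadSets K r n | K ∈ J} = C.image fun g => univ.image (prefixSum g) := by
    ext J
    simp only [mem_filter (s := spreadSets K r n), mem_image]
    constructor
    · rintro ⟨hJ, hKJ⟩
      exact exists_prefixSum_of_mem_spreadSets hrK hJ hKJ
    · rintro ⟨g, hg, rfl⟩
      obtain ⟨hsum, hgr⟩ := mem_filter.1 hg
      rw [Nat.mem_antidiagonalTuple] at hsum
      exact ⟨image_prefixSum_mem_spreadSets hr hgr hsum, top_mem_image_prefixSum hn hsum⟩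
  have hinj :
      Set.InjOn (fun g : Fin n → ℕ => univ.image (prefixSum g)) (C : Set (Fin n → ℕ)) := by
    intro g hg g' hg' hgg'
    have := congrArg (fun s : Finset ℕ => (s : Set ℕ)) hgg'
    simp only [coe_image, coe_univ, Set.image_univ] at this
    exact prefixSum_injective (((hmono hg).range_inj (hmono hg')).1 this)
  rw [himage, card_image_of_injOn hinj, card_antidiagonalTuple_filter_le h,
    card_antidiagonalTuple, show n + (K - r * n) - 1 = K - r * n + (n - 1) by omega,
    Nat.choose_symm_add]
  congr 1
  rw [Nat.sub_mul, one_mul]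
  have := Nat.le_mul_of_pos_left n hr
  omega

end Compositions

section CyclicWindow

lemma eq_of_image_range_add_mod_eq {n t i i' : ℕ} (ht : 0 < t) (htn : t < n) (hi : i < n)
    (hi' : i' < n)
    (h : (range t).image (fun m => (i + m) % n) = (range t).image (fun m => (i' + m) % n)) :
    i = i' := by
  obtain ⟨m, hm, hmi⟩ : ∃ m < t, (i + m) % n = i' := by
    have : i' ∈ (range t).image (fun m => (i' + m) % n) :=
      mem_image.2 ⟨0, mem_range.2 ht, by rw [add_zero, Nat.mod_eq_of_lt hi']⟩
    simpa [← h] using this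
  rcases m with _ | m
  · rwa [add_zero, Nat.mod_eq_of_lt hi] at hmi
  · -- the predecessor `i + m` of `i'` lies in window `i`, hence in window `i'`: so `n ∣ m' + 1`
    have : (i + m) % n ∈ (range t).image (fun m => (i' + m) % n) :=
      h ▸ mem_image.2 ⟨m, mem_range.2 (by omega), rfl⟩
    obtain ⟨m', hm', hm'e⟩ := mem_image.1 this
    rw [mem_range] at hm'
    rw [← hmi, Nat.mod_add_mod] at hm'e
    have : (m' + 1) % n = 0 % n := Nat.ModEq.add_left_cancel' (i + m) <| by
      unfold Nat.ModEq; rw [add_zero, ← hm'e]; ring_nf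
    rw [Nat.mod_eq_of_lt (by omega), Nat.zero_mod] at this
    omega

variable {α : Type*} [LinearOrder α]

def cyclicWindow (J : Finset α) {n : ℕ} (hc : #J = n) (hn : 0 < n) (t i : ℕ) : Finset α :=
  (range t).image fun m => (J.orderIsoOfFin hc ⟨(i + m) % n, Nat.mod_lt _ hn⟩ : α)

lemma cyclicWindow_inj {J : Finset α} {n t : ℕ} (hc : #J = n) (hn : 0 < n) (ht : 0 < t)
    (htn : t < n) {i i' : ℕ} (hi : i < n) (hi' : i' < n)
    (h : cyclicWindow J hc hn t i = cyclicWindow J hc hn t i') : i = i' := by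
  have hσ : Function.Injective fun x : Fin n => (J.orderIsoOfFin hc x : α) :=
    Subtype.val_injective.comp (J.orderIsoOfFin hc).injective
  have hidx (i : ℕ) : cyclicWindow J hc hn t i =
      ((range t).image fun m => (⟨(i + m) % n, Nat.mod_lt _ hn⟩ : Fin n)).image
        fun x => (J.orderIsoOfFin hc x : α) := by
    rw [cyclicWindow, image_image]
    rfl
  rw [hidx, hidx] at h
  have := congrArg (image Fin.val) (image_injective hσ h)
  simp only [image_image] at this
  exact eq_of_image_range_add_mod_eq ht htn hi hi' this

theorem ncard_cyclicWindow_pairs {n t : ℕ} (hn : 0 < n) (ht : 0 < t) (htn : t < n)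
    {𝒮 : Finset (Finset α)} (h𝒮 : ∀ J ∈ 𝒮, #J = n) :
    {p : Finset α × Finset α | p.1 ∈ 𝒮 ∧
      ∃ (hc : #p.1 = n) (i : ℕ), i < n ∧ p.2 = cyclicWindow p.1 hc hn t i}.ncard =
      n * #𝒮 := by
  rw [show n * #𝒮 = #(𝒮 ×ˢ range n) by rw [card_product, card_range, mul_comm],
    ← Set.ncard_coe_finset]
  symm
  refine Set.ncard_congr
    (fun q hq => (q.1, cyclicWindow q.1 (h𝒮 q.1 (mem_product.1 hq).1) hn t q.2)) ?_ ?_ ?_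
  · rintro ⟨J, i⟩ hq
    obtain ⟨hJ, hi⟩ := mem_product.1 hq
    exact ⟨hJ, h𝒮 J hJ, i, mem_range.1 hi, rfl⟩
  · rintro ⟨J, i⟩ ⟨J', i'⟩ hq hq' h
    obtain ⟨rfl, hw⟩ := Prod.mk.inj h
    exact Prod.ext rfl (cyclicWindow_inj _ hn ht htn (mem_range.1 (mem_product.1 hq).2)
      (mem_range.1 (mem_product.1 hq').2) hw)
  · rintro ⟨J, W⟩ ⟨hJ, hc, i, hi, hW⟩
    exact ⟨(J, i), mem_product.2 ⟨hJ, mem_range.2 hi⟩, Prod.ext rfl hW.symm⟩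

end CyclicWindow

theorem stmt16 (K r t L : ℕ) (hr : 0 < r) (ht : 0 < t) (hL : 0 < L)
    (h : r * (t + L) ≤ K) :
    {p : Finset ℕ × Finset ℕ | rSpread K r p.1 ∧ p.1.card = t + L ∧
      ∃ (hc : p.1.card = t + L) (i : ℕ), i < t + L ∧
        p.2 = (Finset.range t).image
          (fun m => ((p.1.orderIsoOfFin hc
            ⟨(i + m) % (t + L), Nat.mod_lt _ (by omega)⟩ : {x // x ∈ p.1}) : ℕ))}.ncard
      = K * Nat.choose (K - (r - 1) * (t + L) - 1) (t + L - 1) := by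
  have hn : 0 < t + L := by omega
  calc _ = (t + L) * #(spreadSets K r (t + L)) := by
        rw [← ncard_cyclicWindow_pairs hn ht (by omega) fun J hJ => (mem_spreadSets.1 hJ).2]
        congr 1
        ext p
        exact and_assoc.symm.trans (and_congr_left' mem_spreadSets.symm)
    _ = K * #{J ∈ spreadSets K r (t + L) | K ∈ J} :=
        mul_card_spreadSets ((Nat.mul_pos hr hn).trans_le h)
    _ = _ := by rw [card_filter_top_mem_spreadSets hr hn h]
end
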